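/- Let α be an infinite cardinal and let M(α) be the space on the set of ordinals ≤ α whose open sets are exactly ∅-complement tails: the sets B_β = {γ ≤ α : γ ≥ β} for β = 0 or β < α a successor ordinal. If M(α) is a subspace of a topological space X, then there exists a continuous retraction f : X → M(α). -/

import Mathlib

open Filter Topology

universe u v

/-- The two points of the Sierpiński space. -/
inductive SPt : Type
  | zero
  | one
deriving DecidableEq

/-- The Sierpiński topology: `{zero}` is open, `{one}` is not. -/
instance : TopologicalSpace SPt := TopologicalSpace.generateFrom {{SPt.zero}}

/-- `A` is closed under limits of `o`-indexed transfinite sequences for all infinite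
ordinals `o ≤ β` (β an infinite cardinal, viewed as an ordinal). -/
def OrdSeqClosed {X : Type u} [TopologicalSpace X] (β : Cardinal.{u}) (A : Set X) : Prop :=
  ∀ o : Ordinal.{u}, Ordinal.omega0 ≤ o → o ≤ β.ord →
    ∀ f : o.ToType → X, (∀ i, f i ∈ A) →
    ∀ x : X, Filter.Tendsto f Filter.atTop (nhds x) → x ∈ A

/-- A space is β-sequential if every such subset is closed. -/
def IsBetaSequential (X : Type u) [TopologicalSpace X] (β : Cardinal.{u}) : Prop :=
  ∀ A : Set X, OrdSeqClosed β A → IsClosed A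

/-- `A` contains limits of all convergent transfinite sequences of its points. -/
def TransSeqClosed {X : Type u} [TopologicalSpace X] (A : Set X) : Prop :=
  ∀ o : Ordinal.{u}, Ordinal.omega0 ≤ o →
    ∀ f : o.ToType → X, (∀ i, f i ∈ A) →
    ∀ x : X, Filter.Tendsto f Filter.atTop (nhds x) → x ∈ A

/-- Pseudoradial space. -/
def IsPseudoradial (X : Type u) [TopologicalSpace X] : Prop :=
  ∀ A : Set X, TransSeqClosed A → IsClosed A

/-- The underlying set of the space `M(α)`: ordinals `≤ α`. -/
structure MPt (α : Cardinal.{u}) : Type (u + 1) where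
  val : Ordinal.{u}
  le : val ≤ α.ord

/-- The topology of `M(α)`: open sets are the tails `B_β = {γ ≤ α : γ ≥ β}` for `β = 0`
or `β` a successor ordinal `< α`. -/
instance MPt.instTopologicalSpace (α : Cardinal.{u}) : TopologicalSpace (MPt α) :=
  TopologicalSpace.generateFrom
    {S : Set (MPt α) | ∃ β : Ordinal.{u},
      (β = 0 ∨ (β < α.ord ∧ ∃ δ : Ordinal.{u}, β = Order.succ δ)) ∧
      S = {γ : MPt α | β ≤ γ.val}}
/-!
A point `x` of `X` is sent to the supremum of those `β` with `B_β` open for which `x` lies in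
`U_β`, the largest open set of `X` tracing `B_β` on `M(α)`. Since the open sets of `M(α)` form a
chain indexed by `0` and successor ordinals, `f⁻¹(B_{δ+1})` is the union of the `U_γ` with
`δ + 1 ≤ γ`, hence open. On `M(α)` itself the supremum is attained from below: if it were
`< m`, its successor `β` would still be `≤ m` and `< α` (an infinite cardinal is a limit ordinal), so
`m ∈ B_β ⊆ U_β` would put `β` in the set.
-/

namespace MPt

variable {α : Cardinal.{u}}

def IsOpenTailIndex (α : Cardinal.{u}) (β : Ordinal.{u}) : Prop :=
  β = 0 ∨ (β < α.ord ∧ ∃ δ : Ordinal.{u}, β = Order.succ δ)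

def tail (β : Ordinal.{u}) : Set (MPt α) := {γ | β ≤ γ.val}

theorem isOpen_tail {β : Ordinal.{u}} (hβ : IsOpenTailIndex α β) :
    IsOpen (tail β : Set (MPt α)) :=
  TopologicalSpace.isOpen_generateFrom_of_mem ⟨β, hβ, rfl⟩

theorem IsOpenTailIndex.le_ord {β : Ordinal.{u}} (hβ : IsOpenTailIndex α β) :
    β ≤ α.ord := by
  rcases hβ with rfl | ⟨hlt, -⟩
  exacts [zero_le, hlt.le]

section Retraction

variable {X : Type v} [TopologicalSpace X] (e : MPt α → X)

def tailNbhd (β : Ordinal.{u}) : Set X := ⋃₀ {U | IsOpen U ∧ e ⁻¹' U = tail β}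

theorem isOpen_tailNbhd (β : Ordinal.{u}) : IsOpen (tailNbhd e β) :=
  isOpen_sUnion fun _ hU => hU.1

theorem preimage_tailNbhd_subset (β : Ordinal.{u}) : e ⁻¹' tailNbhd e β ⊆ tail β := by
  rw [tailNbhd, Set.preimage_sUnion]
  exact Set.iUnion₂_subset fun _ hU => hU.2.subset

theorem tail_subset_preimage_tailNbhd {e : MPt α → X} (he : IsInducing e) {β : Ordinal.{u}}
    (hβ : IsOpenTailIndex α β) : tail β ⊆ e ⁻¹' tailNbhd e β := by
  obtain ⟨U, hU, hUe⟩ := he.isOpen_iff.mp (isOpen_tail hβ)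
  rw [← hUe]
  exact Set.preimage_mono (Set.subset_sUnion_of_mem ⟨hU, hUe⟩)

def tailIndices (x : X) : Set Ordinal.{u} := {β | IsOpenTailIndex α β ∧ x ∈ tailNbhd e β}

theorem bddAbove_tailIndices (x : X) : BddAbove (tailIndices e x) :=
  ⟨α.ord, fun _ hβ => hβ.1.le_ord⟩

noncomputable def retraction (x : X) : MPt α :=
  ⟨sSup (tailIndices e x), csSup_le' fun _ hβ => hβ.1.le_ord⟩

theorem succ_le_retraction_iff {x : X} {δ : Ordinal.{u}} :
    Order.succ δ ≤ (retraction e x).val ↔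
      ∃ γ ∈ tailIndices e x, Order.succ δ ≤ γ := by
  simp only [Order.succ_le_iff]
  exact lt_csSup_iff' (bddAbove_tailIndices e x)

theorem preimage_retraction_tail_succ (δ : Ordinal.{u}) :
    retraction e ⁻¹' tail (Order.succ δ) =
      ⋃ γ ∈ {γ | IsOpenTailIndex α γ ∧ Order.succ δ ≤ γ}, tailNbhd e γ := by
  ext x
  simp only [Set.mem_preimage, tail, Set.mem_ofPred_eq, succ_le_retraction_iff, Set.mem_iUnion,
    tailIndices, exists_prop]
  grind

theorem continuous_retraction : Continuous (retraction e) := by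
  rw [continuous_generateFrom_iff]
  rintro _ ⟨β, hβ | ⟨-, δ, rfl⟩, rfl⟩
  · simp [hβ]
  · exact (preimage_retraction_tail_succ e δ).symm ▸
      isOpen_biUnion fun γ _ => isOpen_tailNbhd e γ

theorem retraction_apply_self {e : MPt α → X} (he : IsInducing e)
    (hα : Order.IsSuccLimit α.ord) (m : MPt α) : retraction e (e m) = m := by
  obtain ⟨m, hm⟩ := m
  simp only [retraction, MPt.mk.injEq]
  refine le_antisymm (csSup_le' fun β hβ => preimage_tailNbhd_subset e β hβ.2) ?_
  by_contra! hlt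
  set s := sSup (tailIndices e (e ⟨m, hm⟩))
  have hs : IsOpenTailIndex α (Order.succ s) := Or.inr ⟨hα.succ_lt (hlt.trans_le hm), s, rfl⟩
  have hmem : Order.succ s ∈ tailIndices e (e ⟨m, hm⟩) :=
    ⟨hs, tail_subset_preimage_tailNbhd he hs (Order.succ_le_of_lt hlt)⟩
  exact (Order.lt_succ s).not_ge (le_csSup (bddAbove_tailIndices e _) hmem)

end Retraction

end MPt

/-- If `M(α)` is a subspace of `X`, there is a continuous retraction of `X`
onto `M(α)`. -/
theorem retraction_onto_M (α : Cardinal.{u}) (hα : Cardinal.aleph0 ≤ α)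
    (X : Type v) [TopologicalSpace X] (e : MPt α → X) (he : Topology.IsEmbedding e) :
    ∃ f : X → MPt α, Continuous f ∧ ∀ m, f (e m) = m :=
  ⟨MPt.retraction e, MPt.continuous_retraction e,
    MPt.retraction_apply_self he.isInducing (Cardinal.isSuccLimit_ord hα)⟩
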